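/- Let ε̃ > 0 and let the potential be W(x) = x (so ∂ₓW ≡ 1). Define on ℝ² the primitive fields ρ(x,t) = ε̃ + sin²(2π(x − t)), v₁ ≡ 1, v₂ ≡ 0, p₁₁(x,t) = 5 + (t − x)(ε̃/2 + 1/4) + sin(4π(x − t))/(16π), p₁₂ ≡ 0, p₂₂ ≡ 1, and let u(x,t) ∈ ℝ⁶ be the corresponding conserved state. Then u is a classical solution of the 1-D Ten-Moment system with source: ∂ₜu(x,t) + ∂ₓ f(u(x,t)) = s(u(x,t)) for all (x,t) ∈ ℝ². -/

import Mathlib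

noncomputable section

/-- Density of a Ten-Moment state. -/
def rho (u : Fin 6 → ℝ) : ℝ := u 0

/-- First velocity component. -/
def v1 (u : Fin 6 → ℝ) : ℝ := u 1 / u 0

/-- Second velocity component. -/
def v2 (u : Fin 6 → ℝ) : ℝ := u 2 / u 0

/-- Pressure component `p₁₁`. -/
def p11 (u : Fin 6 → ℝ) : ℝ := 2 * u 3 - (u 1) ^ 2 / u 0

/-- Pressure component `p₁₂`. -/
def p12 (u : Fin 6 → ℝ) : ℝ := 2 * u 4 - u 1 * u 2 / u 0

/-- Pressure component `p₂₂`. -/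
def p22 (u : Fin 6 → ℝ) : ℝ := 2 * u 5 - (u 2) ^ 2 / u 0

/-- The admissible set: positive density and positive definite pressure tensor. -/
def Uad : Set (Fin 6 → ℝ) :=
  {u | 0 < rho u ∧ 0 < p11 u ∧ 0 < p11 u * p22 u - (p12 u) ^ 2}

/-- The x-direction flux of the Ten-Moment system. -/
def fluxX (u : Fin 6 → ℝ) : Fin 6 → ℝ :=
  ![rho u * v1 u,
    rho u * (v1 u) ^ 2 + p11 u,
    rho u * v1 u * v2 u + p12 u,
    (u 3 + p11 u) * v1 u,
    u 4 * v1 u + (p11 u * v2 u + p12 u * v1 u) / 2,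
    u 5 * v1 u + p12 u * v2 u]

/-- The maximal wave speed in the x-direction. -/
def alphaX (u : Fin 6 → ℝ) : ℝ := |v1 u| + Real.sqrt (3 * p11 u / rho u)

/-- The conserved state corresponding to given primitive variables. -/
def consState (r w1 w2 q11 q12 q22 : ℝ) : Fin 6 → ℝ :=
  ![r, r * w1, r * w2, (q11 + r * w1 ^ 2) / 2, (q12 + r * w1 * w2) / 2, (q22 + r * w2 ^ 2) / 2]

/-- The 1-D body-force source term for a given value `d = ∂ₓW` of the potential
gradient. -/
def src (d : ℝ) (u : Fin 6 → ℝ) : Fin 6 → ℝ :=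
  ![0, -(rho u * d) / 2, 0, -(rho u * v1 u * d) / 2, -(rho u * v2 u * d) / 4, 0]

@[simp] lemma cons_val_five' {α : Type*} (a b c d e f : α) :
    (![a, b, c, d, e, f] : Fin 6 → α) 5 = f := rfl

lemma consState_simple (r q : ℝ) :
    consState r 1 0 q 0 1 = ![r, r, 0, (q + r) / 2, 0, 1 / 2] := by
  funext i
  fin_cases i <;> simp [consState] <;> ring

lemma fluxX_simple (r q : ℝ) (hr : r ≠ 0) :
    fluxX (consState r 1 0 q 0 1) = ![r, r + q, 0, (3 * q + r) / 2, 0, 1 / 2] := by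
  rw [consState_simple]
  funext i
  fin_cases i <;>
    simp [fluxX, rho, v1, v2, p11, p12, p22] <;>
    first | exact hr | (field_simp; try ring)

lemma src_simple (r q : ℝ) (hr : r ≠ 0) :
    src 1 (consState r 1 0 q 0 1) = ![0, -r / 2, 0, -r / 2, 0, 0] := by
  funext i
  fin_cases i <;>
    simp [src, consState, rho, v1, v2] <;>
    field_simp

open Real in
/-- With the potential `W(x) = x` (so `∂ₓW ≡ 1`), the low-density fields
`ρ = ε̃ + sin²(2π(x−t))`, `v₁ ≡ 1`, `v₂ ≡ 0`,
`p₁₁ = 5 + (t−x)(ε̃/2 + 1/4) + sin(4π(x−t))/(16π)`, `p₁₂ ≡ 0`, `p₂₂ ≡ 1`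
form a classical solution of the 1-D Ten-Moment system with source. -/
theorem source_exact_solution_low_density (eps : ℝ) (heps : 0 < eps) :
    ∀ x t : ℝ, ∃ ut ux : Fin 6 → ℝ,
      HasDerivAt (fun s : ℝ => consState (eps + sin (2 * π * (x - s)) ^ 2) 1 0
        (5 + (s - x) * (eps / 2 + 1 / 4) + sin (4 * π * (x - s)) / (16 * π)) 0 1) ut t ∧
      HasDerivAt (fun y : ℝ => fluxX (consState (eps + sin (2 * π * (y - t)) ^ 2) 1 0
        (5 + (t - y) * (eps / 2 + 1 / 4) + sin (4 * π * (y - t)) / (16 * π)) 0 1)) ux x ∧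
      ut + ux = src 1 (consState (eps + sin (2 * π * (x - t)) ^ 2) 1 0
        (5 + (t - x) * (eps / 2 + 1 / 4) + sin (4 * π * (x - t)) / (16 * π)) 0 1) := by
  intro x t
  set A : ℝ := 4 * π * sin (2 * π * (x - t)) * cos (2 * π * (x - t)) with hA
  set B : ℝ := (eps / 2 + 1 / 4) - cos (4 * π * (x - t)) / 4 with hB
  have hRt : HasDerivAt (fun s : ℝ => eps + sin (2 * π * (x - s)) ^ 2) (-A) t := by
    have h1 : HasDerivAt (fun s : ℝ => 2 * π * (x - s)) (2 * π * (-1)) t :=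
      ((hasDerivAt_id t).const_sub x).const_mul (2 * π)
    have h2 := (h1.sin).pow 2
    refine (h2.const_add eps).congr_deriv ?_
    rw [hA]; ring
  have hRx : HasDerivAt (fun y : ℝ => eps + sin (2 * π * (y - t)) ^ 2) A x := by
    have h1 : HasDerivAt (fun y : ℝ => 2 * π * (y - t)) (2 * π * 1) x :=
      ((hasDerivAt_id x).sub_const t).const_mul (2 * π)
    have h2 := (h1.sin).pow 2
    refine (h2.const_add eps).congr_deriv ?_
    rw [hA]; ring
  have hQt : HasDerivAt (fun s : ℝ => 5 + (s - x) * (eps / 2 + 1 / 4)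
      + sin (4 * π * (x - s)) / (16 * π)) B t := by
    have h1 : HasDerivAt (fun s : ℝ => (s - x) * (eps / 2 + 1 / 4))
        (1 * (eps / 2 + 1 / 4)) t := ((hasDerivAt_id t).sub_const x).mul_const _
    have h2 : HasDerivAt (fun s : ℝ => 4 * π * (x - s)) (4 * π * (-1)) t :=
      ((hasDerivAt_id t).const_sub x).const_mul (4 * π)
    have h3 := (h2.sin).div_const (16 * π)
    refine ((h1.const_add 5).add h3).congr_deriv ?_
    rw [hB]
    field_simp
    ring
  have hQx : HasDerivAt (fun y : ℝ => 5 + (t - y) * (eps / 2 + 1 / 4)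
      + sin (4 * π * (y - t)) / (16 * π)) (-B) x := by
    have h1 : HasDerivAt (fun y : ℝ => (t - y) * (eps / 2 + 1 / 4))
        (-1 * (eps / 2 + 1 / 4)) x := ((hasDerivAt_id x).const_sub t).mul_const _
    have h2 : HasDerivAt (fun y : ℝ => 4 * π * (y - t)) (4 * π * 1) x :=
      ((hasDerivAt_id x).sub_const t).const_mul (4 * π)
    have h3 := (h2.sin).div_const (16 * π)
    refine ((h1.const_add 5).add h3).congr_deriv ?_
    rw [hB]
    field_simp
    ring
  have hr : eps + sin (2 * π * (x - t)) ^ 2 ≠ 0 := by positivity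
  refine ⟨![-A, -A, 0, (B + -A) / 2, 0, 0], ![A, A + -B, 0, (3 * -B + A) / 2, 0, 0],
    ?_, ?_, ?_⟩
  · have hfun : (fun s : ℝ => consState (eps + sin (2 * π * (x - s)) ^ 2) 1 0
        (5 + (s - x) * (eps / 2 + 1 / 4) + sin (4 * π * (x - s)) / (16 * π)) 0 1)
        = fun s : ℝ => ![eps + sin (2 * π * (x - s)) ^ 2, eps + sin (2 * π * (x - s)) ^ 2, 0,
          ((5 + (s - x) * (eps / 2 + 1 / 4) + sin (4 * π * (x - s)) / (16 * π))
            + (eps + sin (2 * π * (x - s)) ^ 2)) / 2, 0, 1 / 2] := by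
      funext s; exact consState_simple _ _
    rw [hfun, hasDerivAt_pi]
    intro i
    fin_cases i
    · exact hRt
    · exact hRt
    · exact hasDerivAt_const t (0 : ℝ)
    · exact (hQt.add hRt).div_const 2
    · exact hasDerivAt_const t (0 : ℝ)
    · exact hasDerivAt_const t (1 / 2 : ℝ)
  · have hfun : (fun y : ℝ => fluxX (consState (eps + sin (2 * π * (y - t)) ^ 2) 1 0
        (5 + (t - y) * (eps / 2 + 1 / 4) + sin (4 * π * (y - t)) / (16 * π)) 0 1))
        = fun y : ℝ => ![eps + sin (2 * π * (y - t)) ^ 2,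
          (eps + sin (2 * π * (y - t)) ^ 2)
            + (5 + (t - y) * (eps / 2 + 1 / 4) + sin (4 * π * (y - t)) / (16 * π)), 0,
          (3 * (5 + (t - y) * (eps / 2 + 1 / 4) + sin (4 * π * (y - t)) / (16 * π))
            + (eps + sin (2 * π * (y - t)) ^ 2)) / 2, 0, 1 / 2] := by
      funext y
      refine fluxX_simple _ _ ?_
      positivity
    rw [hfun, hasDerivAt_pi]
    intro i
    fin_cases i
    · exact hRx
    · exact hRx.add hQx
    · exact hasDerivAt_const x (0 : ℝ)
    · exact ((hQx.const_mul 3).add hRx).div_const 2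
    · exact hasDerivAt_const x (0 : ℝ)
    · exact hasDerivAt_const x (1 / 2 : ℝ)
  · rw [src_simple _ _ hr]
    have hcos : cos (4 * π * (x - t)) = 1 - 2 * sin (2 * π * (x - t)) ^ 2 := by
      have h4 : (4 : ℝ) * π * (x - t) = 2 * (2 * π * (x - t)) := by ring
      rw [h4, cos_two_mul]
      have := sin_sq_add_cos_sq (2 * π * (x - t))
      nlinarith
    have hsum : -B = -(eps + sin (2 * π * (x - t)) ^ 2) / 2 := by
      rw [hB, hcos]; ring
    funext i
    fin_cases i
    · show -A + A = (0 : ℝ); ring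
    · show -A + (A + -B) = -(eps + sin (2 * π * (x - t)) ^ 2) / 2
      rw [hB, hcos]; ring
    · show (0 : ℝ) + 0 = 0; ring
    · show (B + -A) / 2 + (3 * -B + A) / 2 = -(eps + sin (2 * π * (x - t)) ^ 2) / 2
      rw [hB, hcos]; ring
    · show (0 : ℝ) + 0 = 0; ring
    · show (0 : ℝ) + 0 = 0; ring
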